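/- There exist reals r_1, …, r_16 ∈ [0,1] such that for every r* ∈ [0,1], min_{1 ≤ i ≤ 16} B(r_i, r*) ≤ 1.5305. -/
import Mathlib


/-- The PH3 bound function `B(r_L, r*)`:
`B(r_L, r*) = 3/2 + min{1/(4r*), 3/(6r*+2)}·(r* − r_L)` if `r* ≥ r_L`, and
`B(r_L, r*) = 3/2 + min{3/(4r*), 9/(6r*+2)}·(r_L − r*)` if `r* < r_L`, where the minima are
written out piecewise: the first equals `3/(6r*+2)` for `r* ≤ 1/3` and `1/(4r*)` for
`r* ≥ 1/3`, the second equals `9/(6r*+2)` for `r* ≤ 1/3` and `3/(4r*)` for `r* ≥ 1/3`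
(in particular, for `r* = 0` both minima are taken as the second expression). -/
noncomputable def Bfun (rL rs : ℝ) : ℝ :=
  if rL ≤ rs then
    3/2 + (if rs ≤ 1/3 then 3/(6*rs + 2) else 1/(4*rs)) * (rs - rL)
  else
    3/2 + (if rs ≤ 1/3 then 9/(6*rs + 2) else 3/(4*rs)) * (rL - rs)

noncomputable def rv : ℕ → ℝ
  | 0 => 3/500
  | 1 => 7/200
  | 2 => 33/500
  | 3 => 1/10
  | 4 => 137/1000
  | 5 => 177/1000
  | 6 => 221/1000
  | 7 => 269/1000
  | 8 => 321/1000
  | 9 => 19/50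
  | 10 => 9/20
  | 11 => 533/1000
  | 12 => 631/1000
  | 13 => 747/1000
  | 14 => 177/200
  | _ => 1

lemma Bfun_le {a rs : ℝ} (h0 : 0 ≤ rs)
    (hA : a ≤ rs → rs ≤ 1/3 → 3*(rs-a) ≤ 0.0305*(6*rs+2))
    (hB : a ≤ rs → 1/3 ≤ rs → (rs-a) ≤ 0.0305*(4*rs))
    (hC : rs ≤ a → rs ≤ 1/3 → 9*(a-rs) ≤ 0.0305*(6*rs+2))
    (hD : rs ≤ a → 1/3 ≤ rs → 3*(a-rs) ≤ 0.0305*(4*rs)) :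
    Bfun a rs ≤ 1.5305 := by
  unfold Bfun
  split_ifs with h1 h2 h2
  · have hd : (0:ℝ) < 6*rs+2 := by linarith
    have h := hA h1 h2
    have : 3/(6*rs+2)*(rs-a) ≤ 0.0305 := by
      rw [div_mul_eq_mul_div, div_le_iff₀ hd]; linarith
    linarith
  · have hd : (0:ℝ) < 4*rs := by push_neg at h2; linarith
    have h := hB h1 (by push_neg at h2; linarith)
    have : 1/(4*rs)*(rs-a) ≤ 0.0305 := by
      rw [div_mul_eq_mul_div, div_le_iff₀ hd]; linarith
    linarith
  · have hd : (0:ℝ) < 6*rs+2 := by linarith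
    have h := hC (by push_neg at h1; linarith) h2
    have : 9/(6*rs+2)*(a-rs) ≤ 0.0305 := by
      rw [div_mul_eq_mul_div, div_le_iff₀ hd]; linarith
    linarith
  · have hd : (0:ℝ) < 4*rs := by push_neg at h2; linarith
    have h := hD (by push_neg at h1; linarith) (by push_neg at h2; linarith)
    have : 3/(4*rs)*(a-rs) ≤ 0.0305 := by
      rw [div_mul_eq_mul_div, div_le_iff₀ hd]; linarith
    linarith

set_option maxHeartbeats 2000000 in
/-- There exist parameters r_1, …, r_16 ∈ [0,1] such that for every r* ∈ [0,1] the best of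
the corresponding 16 parallel copies of PH3 has bound at most 1.5305. -/
theorem kcopy_PH3_bound :
    ∃ r : Fin 16 → ℝ, (∀ i, r i ∈ Set.Icc (0 : ℝ) 1) ∧
      ∀ rs ∈ Set.Icc (0 : ℝ) 1, ∃ i, Bfun (r i) rs ≤ 1.5305 := by
  refine ⟨fun i => rv i.val, ?_, ?_⟩
  · intro i; fin_cases i <;> constructor <;> norm_num [rv]
  · rintro rs ⟨h0, h1⟩
    rcases le_or_gt rs (277/10000) with hc0 | hc0
    · refine ⟨0, ?_⟩
      show Bfun (3/500) rs ≤ 1.5305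
      exact Bfun_le h0 (fun hx hy => by linarith) (fun hx hy => by linarith)
        (fun hx hy => by linarith) (fun hx hy => by linarith)
    rcases le_or_gt rs (581/10000) with hc1 | hc1
    · refine ⟨1, ?_⟩
      show Bfun (7/200) rs ≤ 1.5305
      exact Bfun_le h0 (fun hx hy => by linarith) (fun hx hy => by linarith)
        (fun hx hy => by linarith) (fun hx hy => by linarith)
    rcases le_or_gt rs (457/5000) with hc2 | hc2
    · refine ⟨2, ?_⟩
      show Bfun (33/500) rs ≤ 1.5305
      exact Bfun_le h0 (fun hx hy => by linarith) (fun hx hy => by linarith)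
        (fun hx hy => by linarith) (fun hx hy => by linarith)
    rcases le_or_gt rs (1277/10000) with hc3 | hc3
    · refine ⟨3, ?_⟩
      show Bfun (1/10) rs ≤ 1.5305
      exact Bfun_le h0 (fun hx hy => by linarith) (fun hx hy => by linarith)
        (fun hx hy => by linarith) (fun hx hy => by linarith)
    rcases le_or_gt rs (1669/10000) with hc4 | hc4
    · refine ⟨4, ?_⟩
      show Bfun (137/1000) rs ≤ 1.5305
      exact Bfun_le h0 (fun hx hy => by linarith) (fun hx hy => by linarith)
        (fun hx hy => by linarith) (fun hx hy => by linarith)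
    rcases le_or_gt rs (21/100) with hc5 | hc5
    · refine ⟨5, ?_⟩
      show Bfun (177/1000) rs ≤ 1.5305
      exact Bfun_le h0 (fun hx hy => by linarith) (fun hx hy => by linarith)
        (fun hx hy => by linarith) (fun hx hy => by linarith)
    rcases le_or_gt rs (257/1000) with hc6 | hc6
    · refine ⟨6, ?_⟩
      show Bfun (221/1000) rs ≤ 1.5305
      exact Bfun_le h0 (fun hx hy => by linarith) (fun hx hy => by linarith)
        (fun hx hy => by linarith) (fun hx hy => by linarith)
    rcases le_or_gt rs (77/250) with hc7 | hc7
    · refine ⟨7, ?_⟩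
      show Bfun (269/1000) rs ≤ 1.5305
      exact Bfun_le h0 (fun hx hy => by linarith) (fun hx hy => by linarith)
        (fun hx hy => by linarith) (fun hx hy => by linarith)
    rcases le_or_gt rs (913/2500) with hc8 | hc8
    · refine ⟨8, ?_⟩
      show Bfun (321/1000) rs ≤ 1.5305
      exact Bfun_le h0 (fun hx hy => by linarith) (fun hx hy => by linarith)
        (fun hx hy => by linarith) (fun hx hy => by linarith)
    rcases le_or_gt rs (173/400) with hc9 | hc9
    · refine ⟨9, ?_⟩
      show Bfun (19/50) rs ≤ 1.5305
      exact Bfun_le h0 (fun hx hy => by linarith) (fun hx hy => by linarith)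
        (fun hx hy => by linarith) (fun hx hy => by linarith)
    rcases le_or_gt rs (2561/5000) with hc10 | hc10
    · refine ⟨10, ?_⟩
      show Bfun (9/20) rs ≤ 1.5305
      exact Bfun_le h0 (fun hx hy => by linarith) (fun hx hy => by linarith)
        (fun hx hy => by linarith) (fun hx hy => by linarith)
    rcases le_or_gt rs (379/625) with hc11 | hc11
    · refine ⟨11, ?_⟩
      show Bfun (533/1000) rs ≤ 1.5305
      exact Bfun_le h0 (fun hx hy => by linarith) (fun hx hy => by linarith)
        (fun hx hy => by linarith) (fun hx hy => by linarith)
    rcases le_or_gt rs (7179/10000) with hc12 | hc12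
    · refine ⟨12, ?_⟩
      show Bfun (631/1000) rs ≤ 1.5305
      exact Bfun_le h0 (fun hx hy => by linarith) (fun hx hy => by linarith)
        (fun hx hy => by linarith) (fun hx hy => by linarith)
    rcases le_or_gt rs (1701/2000) with hc13 | hc13
    · refine ⟨13, ?_⟩
      show Bfun (747/1000) rs ≤ 1.5305
      exact Bfun_le h0 (fun hx hy => by linarith) (fun hx hy => by linarith)
        (fun hx hy => by linarith) (fun hx hy => by linarith)
    refine ⟨14, ?_⟩
    show Bfun (177/200) rs ≤ 1.5305
    exact Bfun_le h0 (fun hx hy => by linarith) (fun hx hy => by linarith)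
      (fun hx hy => by linarith) (fun hx hy => by linarith)
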